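/- Let n ≥ 2, k ≥ 1 be integers, β = β_{n,k} the positive real with β^{2^k} = γ_n, and α = 1 − β/2. Suppose the projections satisfy π_{β², 1−β²/2}(ξ⁻_{n,k−1}) = π_{β², 1−β²/2}(ξ⁺_{n,k−1}) = 1/2 (inductive hypothesis). Then π_{β,α}(ξ⁻_{n,k}) = π_{β,α}(ξ⁺_{n,k}) = 1/2, using the substitution identity κ̃(ξ^±_{n,k−1}) = ξ^±_{n,k} where κ̃: 0↦01, 1↦10, and the projection identity π_{β,α}(κ̃(ω)) = β·π_{β²,1−β²/2}(ω) + π_{β²,1−β²/2}(*(ω)) − (β+1)(1−β²/2)/(1−β²) + (1−β/2)/(1−β). -/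

import Mathlib

/-!
The block of `ξ⁻_{n,k+1}` is `κ̃` applied to the block of `ξ⁻_{n,k}`, so `ξ^±_{n,k} = κ̃(ξ^±_{n,k-1})`.
Splitting the digit series of `π_{β,α}(κ̃ ω)` into even and odd positions expresses it through
`π_{β²,α'}(ω)` and `π_{β²,α'}(*ω)`; when both equal `1/2` and `α = 1 - β/2`, `α' = 1 - β²/2`,
the resulting expression is `1/2` again.
-/

/-- The prefix `ξ⁻_{n,k}|_{2^k}`. -/
def xiPrefix : ℕ → List Bool
  | 0 => [false]
  | k + 1 => xiPrefix k ++ (xiPrefix k).map not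

/-- The period block of `ξ⁻_{n,k}`. -/
def xiBlock (n k : ℕ) : List Bool :=
  xiPrefix k ++ (List.replicate n ((xiPrefix k).map not)).flatten

/-- The `m`-th letter (0-indexed) of the periodic infinite word `ξ⁻_{n,k}`. -/
def xiLetterNeg (n k m : ℕ) : Bool :=
  (xiBlock n k).getD (m % ((n + 1) * 2 ^ k)) false

/-- The projection `π_{β,α}(ω) = α/(1-β) + Σ_{m≥1} ω_m β^{-m}`. -/
noncomputable def piProj (β α : ℝ) (ω : ℕ → Bool) : ℝ :=
  α / (1 - β) + ∑' m : ℕ, (if ω m then (1:ℝ) else 0) / β ^ (m + 1)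

-- The substitution `κ̃ : 0 ↦ 01, 1 ↦ 10`, on finite and on infinite words.
def substKappa (l : List Bool) : List Bool :=
  l.flatMap fun b => [b, !b]

def kappa (ω : ℕ → Bool) : ℕ → Bool :=
  fun m => if m % 2 = 0 then ω (m / 2) else !ω (m / 2)

@[simp]
lemma substKappa_cons (b : Bool) (l : List Bool) :
    substKappa (b :: l) = b :: (!b) :: substKappa l := rfl

lemma substKappa_append (l l' : List Bool) :
    substKappa (l ++ l') = substKappa l ++ substKappa l' :=
  List.flatMap_append

lemma substKappa_map_not (l : List Bool) : substKappa (l.map not) = (substKappa l).map not := by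
  induction l with
  | nil => rfl
  | cons b l ih => simp [ih]

lemma substKappa_flatten_replicate (n : ℕ) (l : List Bool) :
    substKappa (List.replicate n l).flatten = (List.replicate n (substKappa l)).flatten := by
  induction n with
  | zero => rfl
  | succ n ih => rw [List.replicate_succ, List.flatten_cons, substKappa_append, ih]; rfl

lemma getD_substKappa_two_mul {l : List Bool} {i : ℕ} (hi : i < l.length) :
    (substKappa l).getD (2 * i) false = l.getD i false := by
  induction l generalizing i with
  | nil => simp at hi
  | cons b l ih =>
    cases i with
    | zero => rfl
    | succ i => simpa [Nat.mul_succ] using ih (by simpa using hi)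

lemma getD_substKappa_two_mul_add_one {l : List Bool} {i : ℕ} (hi : i < l.length) :
    (substKappa l).getD (2 * i + 1) false = !l.getD i false := by
  induction l generalizing i with
  | nil => simp at hi
  | cons b l ih =>
    cases i with
    | zero => rfl
    | succ i => simpa [Nat.mul_succ] using ih (by simpa using hi)

@[simp]
lemma kappa_two_mul (ω : ℕ → Bool) (j : ℕ) : kappa ω (2 * j) = ω j := by
  simp [kappa]

@[simp]
lemma kappa_two_mul_add_one (ω : ℕ → Bool) (j : ℕ) : kappa ω (2 * j + 1) = !ω j := by
  simp [kappa, Nat.add_mod, Nat.add_div]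

lemma kappa_not (ω : ℕ → Bool) : kappa (fun m => !ω m) = fun m => !kappa ω m := by
  funext m
  unfold kappa
  split_ifs <;> rfl

lemma xiPrefix_succ (k : ℕ) : xiPrefix (k + 1) = substKappa (xiPrefix k) := by
  induction k with
  | zero => rfl
  | succ k ih =>
    conv_rhs => rw [xiPrefix]
    rw [substKappa_append, substKappa_map_not, ← ih, xiPrefix]

lemma xiBlock_succ (n k : ℕ) : xiBlock n (k + 1) = substKappa (xiBlock n k) := by
  rw [xiBlock, xiBlock, substKappa_append, substKappa_flatten_replicate, substKappa_map_not,
    xiPrefix_succ]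

lemma length_xiPrefix (k : ℕ) : (xiPrefix k).length = 2 ^ k := by
  induction k with
  | zero => rfl
  | succ k ih => rw [xiPrefix, List.length_append, List.length_map, ih, pow_succ, mul_two]

lemma length_xiBlock (n k : ℕ) : (xiBlock n k).length = (n + 1) * 2 ^ k := by
  simp [xiBlock, length_xiPrefix]
  ring

lemma two_mul_add_one_mod_two_mul (j : ℕ) {p : ℕ} (hp : 0 < p) :
    (2 * j + 1) % (2 * p) = 2 * (j % p) + 1 := by
  have hj : 2 * j + 1 = j / p * (2 * p) + (2 * (j % p) + 1) := by
    nth_rw 1 [← Nat.div_add_mod j p]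
    ring
  rw [hj, Nat.mul_add_mod_of_lt]
  have := Nat.mod_lt j hp
  omega

lemma xiLetterNeg_succ (n k : ℕ) : xiLetterNeg n (k + 1) = kappa (xiLetterNeg n k) := by
  have hp : 0 < (n + 1) * 2 ^ k := by positivity
  have hlen : ∀ j, j % ((n + 1) * 2 ^ k) < (xiBlock n k).length := fun j => by
    rw [length_xiBlock]; exact Nat.mod_lt j hp
  have hperiod : (n + 1) * 2 ^ (k + 1) = 2 * ((n + 1) * 2 ^ k) := by ring
  funext m
  obtain ⟨j, rfl | rfl⟩ := Nat.even_or_odd' m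
  · rw [kappa_two_mul, xiLetterNeg, xiLetterNeg, xiBlock_succ, hperiod, Nat.mul_mod_mul_left,
      getD_substKappa_two_mul (hlen j)]
  · rw [kappa_two_mul_add_one, xiLetterNeg, xiLetterNeg, xiBlock_succ, hperiod,
      two_mul_add_one_mod_two_mul j hp, getD_substKappa_two_mul_add_one (hlen j)]

lemma summable_digits {β : ℝ} (hβ : 1 < β) (ω : ℕ → Bool) :
    Summable fun m => (if ω m then (1 : ℝ) else 0) / β ^ (m + 1) := by
  have hgeom : Summable fun m : ℕ => (β⁻¹) ^ m :=
    summable_geometric_of_lt_one (by positivity) (inv_lt_one_of_one_lt₀ hβ)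
  refine .of_nonneg_of_le (fun m => by positivity) (fun m => ?_) hgeom
  rw [inv_pow]
  calc (if ω m then (1 : ℝ) else 0) / β ^ (m + 1) ≤ 1 / β ^ (m + 1) := by
        gcongr; split <;> norm_num
    _ ≤ 1 / β ^ m := by gcongr; exacts [hβ.le, m.le_succ]
    _ = (β ^ m)⁻¹ := one_div _

lemma tsum_digits_kappa {β : ℝ} (hβ : 1 < β) (ω : ℕ → Bool) :
    ∑' m, (if kappa ω m then (1 : ℝ) else 0) / β ^ (m + 1) =
      β * ∑' j, (if ω j then (1 : ℝ) else 0) / (β ^ 2) ^ (j + 1) +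
        ∑' j, (if !ω j then (1 : ℝ) else 0) / (β ^ 2) ^ (j + 1) := by
  have hβ2 : 1 < β ^ 2 := one_lt_pow₀ hβ two_ne_zero
  have heven : (fun j => (if kappa ω (2 * j) then (1 : ℝ) else 0) / β ^ (2 * j + 1)) =
      fun j => β * ((if ω j then (1 : ℝ) else 0) / (β ^ 2) ^ (j + 1)) := by
    funext j
    rw [kappa_two_mul, ← pow_mul, mul_div_assoc', show 2 * (j + 1) = 2 * j + 1 + 1 by ring,
      pow_succ β (2 * j + 1), mul_comm β, mul_div_mul_right _ _ (by positivity)]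
  have hodd : (fun j => (if kappa ω (2 * j + 1) then (1 : ℝ) else 0) / β ^ (2 * j + 1 + 1)) =
      fun j => (if !ω j then (1 : ℝ) else 0) / (β ^ 2) ^ (j + 1) := by
    funext j
    rw [kappa_two_mul_add_one, ← pow_mul]
    ring_nf
  rw [← tsum_even_add_odd, heven, hodd, tsum_mul_left]
  · exact heven ▸ (summable_digits hβ2 ω).mul_left β
  · exact hodd ▸ summable_digits hβ2 _

lemma piProj_kappa {β : ℝ} (hβ : 1 < β) (α α' : ℝ) (ω : ℕ → Bool) :
    piProj β α (kappa ω) = β * piProj (β ^ 2) α' ω + piProj (β ^ 2) α' (fun m => !ω m) -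
      (β + 1) * α' / (1 - β ^ 2) + α / (1 - β) := by
  have hβ1 : 1 - β ≠ 0 := by linarith
  have hβ2 : 1 + β ≠ 0 := by linarith
  have hβsq : 1 - β ^ 2 = (1 - β) * (1 + β) := by ring
  rw [piProj, piProj, piProj, tsum_digits_kappa hβ, hβsq]
  field_simp
  ring

lemma piProj_kappa_eq_half {β : ℝ} (hβ : 1 < β) {ω : ℕ → Bool}
    (h : piProj (β ^ 2) (1 - β ^ 2 / 2) ω = 1 / 2)
    (h' : piProj (β ^ 2) (1 - β ^ 2 / 2) (fun m => !ω m) = 1 / 2) :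
    piProj β (1 - β / 2) (kappa ω) = 1 / 2 := by
  have hβ1 : 1 - β ≠ 0 := by linarith
  have hβ2 : 1 + β ≠ 0 := by linarith
  rw [piProj_kappa hβ _ (1 - β ^ 2 / 2), h, h', show 1 - β ^ 2 = (1 - β) * (1 + β) by ring]
  field_simp
  ring

theorem projection_xi_inductive_step_general (n k : ℕ) (hk : 1 ≤ k) (γ β : ℝ)
    (hγ : γ ∈ Set.Ioo (1:ℝ) 2)
    (hβ : 0 < β) (hβγ : β ^ 2 ^ k = γ)
    (hindNeg : piProj (β ^ 2) (1 - β ^ 2 / 2) (xiLetterNeg n (k - 1)) = 1 / 2)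
    (hindPos : piProj (β ^ 2) (1 - β ^ 2 / 2) (fun m => ! xiLetterNeg n (k - 1) m) = 1 / 2) :
    piProj β (1 - β / 2) (xiLetterNeg n k) = 1 / 2 ∧
      piProj β (1 - β / 2) (fun m => ! xiLetterNeg n k m) = 1 / 2 := by
  obtain ⟨k, rfl⟩ : ∃ k', k = k' + 1 := ⟨k - 1, by omega⟩
  have hβ1 : 1 < β :=
    (one_lt_pow_iff_of_nonneg hβ.le (by positivity)).mp (hβγ ▸ hγ.1)
  rw [Nat.add_sub_cancel] at hindNeg hindPos
  rw [xiLetterNeg_succ, ← kappa_not]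
  exact ⟨piProj_kappa_eq_half hβ1 hindNeg hindPos,
    piProj_kappa_eq_half hβ1 hindPos (by simpa using hindNeg)⟩

theorem projection_xi_inductive_step (n k : ℕ) (hn : 2 ≤ n) (hk : 1 ≤ k) (γ β : ℝ)
    (hγ : γ ∈ Set.Ioo (1:ℝ) 2) (hγeq : γ ^ n = ∑ j ∈ Finset.range n, γ ^ j)
    (hβ : 0 < β) (hβγ : β ^ 2 ^ k = γ)
    (hindNeg : piProj (β ^ 2) (1 - β ^ 2 / 2) (xiLetterNeg n (k - 1)) = 1 / 2)
    (hindPos : piProj (β ^ 2) (1 - β ^ 2 / 2) (fun m => ! xiLetterNeg n (k - 1) m) = 1 / 2) :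
    piProj β (1 - β / 2) (xiLetterNeg n k) = 1 / 2 ∧
      piProj β (1 - β / 2) (fun m => ! xiLetterNeg n k m) = 1 / 2 :=
  projection_xi_inductive_step_general n k hk γ β hγ hβ hβγ hindNeg hindPos
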